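/- For every integer n ≥ 1, the point of tangency of the Ford circles K[F(n+1), F(n)] and K[F(n+2), F(n+1)] is the point (F(2n+2)/F(2n+1), 1/F(2n+1)); that is, ((F(n+1)·F(n) + F(n+2)·F(n+1))/(F(n)² + F(n+1)²), 1/(F(n)² + F(n+1)²)) equals (F(2n+2)/F(2n+1), 1/F(2n+1)). Hence the points of the circle centered at (1/2, 0) of radius √5/2 given by (F(2n+2)/F(2n+1), 1/F(2n+1)) are tangency points of Ford circles. -/

import Mathlib

lemma cassini (n : ℕ) : (Nat.fib (n+2) : ℤ) * Nat.fib n - (Nat.fib (n+1):ℤ)^2 = (-1)^(n+1) := by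
  induction n with
  | zero => simp
  | succ m ih =>
    have h2 : (Nat.fib (m+3) : ℤ) = Nat.fib (m+2) + Nat.fib (m+1) := by
      rw [show m+3 = (m+1)+2 by ring, Nat.fib_add_two]; push_cast; ring
    have h1 : (Nat.fib (m+2) : ℤ) = Nat.fib (m+1) + Nat.fib m := by
      rw [Nat.fib_add_two]; push_cast; ring
    rw [h2, pow_succ]
    linear_combination -ih - (Nat.fib (m+2):ℤ) * h1

/-- For every `n ≥ 1`, the point of tangency of the Ford circles
`K[F(n+1), F(n)]` and `K[F(n+2), F(n+1)]`, namely
`((F(n+1)·F(n) + F(n+2)·F(n+1))/(F(n)² + F(n+1)²), 1/(F(n)² + F(n+1)²))`,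
equals `(F(2n+2)/F(2n+1), 1/F(2n+1))`; hence these points, which lie on the circle
centered at `(1/2, 0)` of radius `√5/2`, are tangency points of Ford circles. -/
theorem ford_fibonacci_tangency_point_B (n : ℕ) (hn : 1 ≤ n) :
    ((((Nat.fib (n + 1) : ℝ) * Nat.fib n + (Nat.fib (n + 2) : ℝ) * Nat.fib (n + 1)) /
        ((Nat.fib n : ℝ) ^ 2 + (Nat.fib (n + 1) : ℝ) ^ 2),
      1 / ((Nat.fib n : ℝ) ^ 2 + (Nat.fib (n + 1) : ℝ) ^ 2)) : ℝ × ℝ)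
      = ((Nat.fib (2 * n + 2) : ℝ) / (Nat.fib (2 * n + 1) : ℝ),
         1 / (Nat.fib (2 * n + 1) : ℝ)) ∧
    ((Nat.fib (2 * n + 2) : ℝ) / (Nat.fib (2 * n + 1) : ℝ) - 1 / 2) ^ 2
        + (1 / (Nat.fib (2 * n + 1) : ℝ)) ^ 2 = 5 / 4 := by
  have hden : Nat.fib (2*n+1) = Nat.fib n ^ 2 + Nat.fib (n+1) ^ 2 := by
    rw [Nat.fib_two_mul_add_one]; ring
  have hnum : Nat.fib (2*n+2) = Nat.fib n * Nat.fib (n+1) + Nat.fib (n+1) * Nat.fib (n+2) := by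
    rw [show 2*n+2 = n + (n+1) + 1 by ring, Nat.fib_add]
  constructor
  · rw [hden, hnum]
    push_cast
    rw [Prod.ext_iff]
    constructor <;> ring_nf
  · have hpos : 0 < Nat.fib (2*n+1) := Nat.fib_pos.2 (by omega)
    have ha : (0:ℝ) < Nat.fib (2*n+1) := by exact_mod_cast hpos
    have hcas := cassini (2*n)
    have h2 : (Nat.fib (2*n+2) : ℝ) * Nat.fib (2*n) - (Nat.fib (2*n+1):ℝ)^2 = -1 := by
      have : ((-1:ℤ))^(2*n+1) = -1 := by
        rw [pow_succ, pow_mul]; simp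
      rw [this] at hcas
      exact_mod_cast hcas
    have h3 : (Nat.fib (2*n+2) : ℝ) = Nat.fib (2*n+1) + Nat.fib (2*n) := by
      rw [Nat.fib_add_two]; push_cast; ring
    field_simp
    linear_combination 16*h2 + 16*(Nat.fib (2*n+2):ℝ)*h3
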